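/- Suppose the whole state space X is an LD-set for Q, with constants ε⁻_X, ε⁺_X, and set ρ_X := 1 − (ε⁻_X/ε⁺_X)². Then for any initial probability measures ν and ν' and any observation sequence y_{0:n} for which both filtering distributions are well defined, ‖φ_{ν,n}[y_{0:n}] − φ_{ν',n}[y_{0:n}]‖_TV ≤ ρ_X^n. -/

import Mathlib

open MeasureTheory ProbabilityTheory Filter
open scoped ENNReal

/-- A set `C` is a local Doeblin (LD) set for the kernel `Q`, with minorizing/majorizing
measure `lam` and constants `em, ep`. -/
def IsLDSet {X : Type*} [MeasurableSpace X] (Q : Kernel X X) (C : Set X)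
    (lam : Measure X) (em ep : ℝ) : Prop :=
  MeasurableSet C ∧ 0 < lam C ∧ 0 < em ∧ 0 < ep ∧
    ∀ x ∈ C, ∀ A : Set X, MeasurableSet A →
      ENNReal.ofReal em * lam (A ∩ C) ≤ Q x (A ∩ C) ∧
        Q x (A ∩ C) ≤ ENNReal.ofReal ep * lam (A ∩ C)

/-- `QV(x) = ∫ V dQ(x,·)` for a drift function `V`. -/
noncomputable def kernelV {X : Type*} [MeasurableSpace X] (Q : Kernel X X) (V : X → ℝ)
    (x : X) : ℝ≥0∞ :=
  ∫⁻ x', ENNReal.ofReal (V x') ∂(Q x)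

/-- `Υ_A(y) = sup_{x ∈ A} g(x,y) QV(x)/V(x)`. -/
noncomputable def Ups {X Y : Type*} [MeasurableSpace X] (Q : Kernel X X)
    (g : X → Y → ℝ) (V : X → ℝ) (A : Set X) (y : Y) : ℝ≥0∞ :=
  ⨆ x ∈ A, ENNReal.ofReal (g x y) * kernelV Q V x / ENNReal.ofReal (V x)

/-- `Ψ_D(y) = λ_D(g(·,y) 1_D)`. -/
noncomputable def Psi {X Y : Type*} [MeasurableSpace X] (g : X → Y → ℝ)
    (lam : Measure X) (D : Set X) (y : Y) : ℝ≥0∞ :=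
  ∫⁻ x in D, ENNReal.ofReal (g x y) ∂lam

/-- `Φ_{ν,D}(y₀,y₁) = ν[g(·,y₀) Q (g(·,y₁) 1_D)]`. -/
noncomputable def Phi {X Y : Type*} [MeasurableSpace X] (Q : Kernel X X)
    (g : X → Y → ℝ) (ν : Measure X) (D : Set X) (y0 y1 : Y) : ℝ≥0∞ :=
  ∫⁻ x0, ENNReal.ofReal (g x0 y0) * ∫⁻ x1 in D, ENNReal.ofReal (g x1 y1) ∂(Q x0) ∂ν

/-- The unnormalized filtering measures: `filtSeq Q g ν y n` has total mass
`∫ ν(dx₀) g(x₀,y₀) ∏_{i=1}^n Q(x_{i−1},dx_i) g(x_i,y_i)`. -/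
noncomputable def filtSeq {X Y : Type*} [MeasurableSpace X] (Q : Kernel X X)
    (g : X → Y → ℝ) (ν : Measure X) (y : ℕ → Y) : ℕ → Measure X
  | 0 => ν.withDensity (fun x => ENNReal.ofReal (g x (y 0)))
  | n + 1 => ((filtSeq Q g ν y n).bind (fun x => Q x)).withDensity
      (fun x => ENNReal.ofReal (g x (y (n + 1))))

/-- The filtering distribution `φ_{ν,n}[y_{0:n}]` (normalized version of `filtSeq`). -/
noncomputable def filt {X Y : Type*} [MeasurableSpace X] (Q : Kernel X X)
    (g : X → Y → ℝ) (ν : Measure X) (y : ℕ → Y) (n : ℕ) : Measure X :=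
  (filtSeq Q g ν y n Set.univ)⁻¹ • filtSeq Q g ν y n

/-- The total variation distance between two (finite) measures,
`sup_A |μ(A) − ν(A)|` over measurable sets `A`. -/
noncomputable def tvDist {X : Type*} [MeasurableSpace X] (μ ν : Measure X) : ℝ :=
  ⨆ A : {S : Set X // MeasurableSet S}, |(μ A.1).toReal - (ν A.1).toReal|


/-!
With the backward functions `β_m f = Q(G₁ Q(G₂ ⋯ Q(G_m f)))`, `φ_{ν,n}(A)` is the mean of
`h = β_n 1_A / β_n 1` under a probability measure depending on `ν`, so the total variation
distance is at most the oscillation of `h`. One backward step writes the ratio at `x` as the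
mean of the previous ratio under the normalisation of `Q(x, dz) G(z) β(z)`; by the two-sided
bound `ε⁻ λ ≤ Q(x, ·) ≤ ε⁺ λ` all these measures dominate `ε⁻/ε⁺` times one common probability
measure, and Dobrushin's coupling contracts the oscillation by `1 - ε⁻/ε⁺ ≤ ρ_X`.
-/

section

variable {X : Type*} [MeasurableSpace X]

def OscillationLE (h : X → ℝ≥0∞) (r : ℝ≥0∞) : Prop := ∀ z z', h z ≤ h z' + r

/-- Dobrushin's coupling bound: the common part `κ` contributes equally to both integrals,
so only the remaining mass `1 - κ univ` sees the oscillation of `h`. -/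
theorem lintegral_le_lintegral_add_of_le_of_le {μ μ' κ : Measure X}
    [IsProbabilityMeasure μ] [IsProbabilityMeasure μ'] (hκ : κ ≤ μ) (hκ' : κ ≤ μ')
    {h : X → ℝ≥0∞} {r : ℝ≥0∞} (hh : OscillationLE h r) :
    ∫⁻ z, h z ∂μ ≤ ∫⁻ z, h z ∂μ' + (1 - κ Set.univ) * r := by
  have : IsFiniteMeasure κ := isFiniteMeasure_of_le μ hκ
  set I := ⨅ z, h z
  have hI : ∀ z, h z ≤ I + r := fun z => by
    rw [ENNReal.iInf_add]
    exact le_iInf (hh z)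
  have hsplit : ∀ ρ : Measure X, κ ≤ ρ → ∫⁻ z, h z ∂ρ = ∫⁻ z, h z ∂(ρ - κ) + ∫⁻ z, h z ∂κ :=
    fun ρ hρ => by rw [← lintegral_add_measure, Measure.sub_add_cancel_of_le hρ]
  have hmass : ∀ ρ : Measure X, [IsProbabilityMeasure ρ] → κ ≤ ρ →
      (ρ - κ) Set.univ = 1 - κ Set.univ :=
    fun ρ _ hρ => by rw [Measure.sub_apply MeasurableSet.univ hρ, measure_univ]
  have hupper : ∫⁻ z, h z ∂(μ - κ) ≤ (I + r) * (1 - κ Set.univ) := by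
    rw [← hmass μ hκ, ← lintegral_const]
    exact lintegral_mono hI
  have hlower : I * (1 - κ Set.univ) ≤ ∫⁻ z, h z ∂(μ' - κ) := by
    rw [← hmass μ' hκ', ← lintegral_const]
    exact lintegral_mono fun z => iInf_le _ z
  calc ∫⁻ z, h z ∂μ ≤ (I + r) * (1 - κ Set.univ) + ∫⁻ z, h z ∂κ := by
        rw [hsplit μ hκ]; gcongr
    _ = I * (1 - κ Set.univ) + ∫⁻ z, h z ∂κ + (1 - κ Set.univ) * r := by ring
    _ ≤ ∫⁻ z, h z ∂μ' + (1 - κ Set.univ) * r := by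
        rw [hsplit μ' hκ']; gcongr

theorem isProbabilityMeasure_inv_smul_withDensity {μ : Measure X} {ρ : X → ℝ≥0∞}
    (h0 : ∫⁻ z, ρ z ∂μ ≠ 0) (htop : ∫⁻ z, ρ z ∂μ ≠ ∞) :
    IsProbabilityMeasure ((∫⁻ z, ρ z ∂μ)⁻¹ • μ.withDensity ρ) :=
  ⟨by rw [Measure.smul_apply, withDensity_apply _ MeasurableSet.univ, Measure.restrict_univ,
    smul_eq_mul, ENNReal.inv_mul_cancel h0 htop]⟩

theorem lintegral_inv_smul_withDensity {μ : Measure X} {ρ h : X → ℝ≥0∞}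
    (hρ : Measurable ρ) (hh : Measurable h) :
    ∫⁻ z, h z ∂((∫⁻ z, ρ z ∂μ)⁻¹ • μ.withDensity ρ)
      = (∫⁻ z, ρ z * h z ∂μ) / ∫⁻ z, ρ z ∂μ := by
  rw [lintegral_smul_measure, lintegral_withDensity_eq_lintegral_mul _ hρ hh, smul_eq_mul,
    div_eq_mul_inv, mul_comm]
  rfl

noncomputable def backwardStep (Q : Kernel X X) (w f : X → ℝ≥0∞) (x : X) : ℝ≥0∞ :=
  ∫⁻ z, w z * f z ∂Q x

/-- `backward Q G m f x = ∫ Q(x, dx₁) G₁(x₁) ⋯ Q(x_{m-1}, dx_m) G_m(x_m) f(x_m)`. -/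
noncomputable def backward (Q : Kernel X X) (G : ℕ → X → ℝ≥0∞) :
    ℕ → (X → ℝ≥0∞) → X → ℝ≥0∞
  | 0, f => f
  | m + 1, f => backward Q G m (backwardStep Q (G (m + 1)) f)

section Backward

variable {Q : Kernel X X} {G : ℕ → X → ℝ≥0∞} {w f : X → ℝ≥0∞}

theorem measurable_backwardStep (hw : Measurable w) (hf : Measurable f) :
    Measurable (backwardStep Q w f) :=
  (hw.mul hf).lintegral_kernel

theorem backwardStep_mono {f' : X → ℝ≥0∞} (h : f ≤ f') :
    backwardStep Q w f ≤ backwardStep Q w f' :=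
  fun _ => lintegral_mono fun z => by gcongr; exact h z

theorem backwardStep_const_mul (hw : Measurable w) (hf : Measurable f) (c : ℝ≥0∞) :
    backwardStep Q w (fun z => c * f z) = fun x => c * backwardStep Q w f x := by
  funext x
  simp_rw [backwardStep, mul_left_comm _ c]
  exact lintegral_const_mul c (hw.mul hf)

theorem measurable_backward (hG : ∀ i, Measurable (G i)) :
    ∀ m {f : X → ℝ≥0∞}, Measurable f → Measurable (backward Q G m f)
  | 0, _, hf => hf
  | m + 1, _, hf => measurable_backward hG m (measurable_backwardStep (hG _) hf)

theorem backward_mono : ∀ m {f f' : X → ℝ≥0∞}, f ≤ f' → backward Q G m f ≤ backward Q G m f'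
  | 0, _, _, h => h
  | m + 1, _, _, h => backward_mono m (backwardStep_mono h)

theorem backward_const_mul (hG : ∀ i, Measurable (G i)) :
    ∀ m {f : X → ℝ≥0∞}, Measurable f → ∀ c : ℝ≥0∞,
      backward Q G m (fun z => c * f z) = fun x => c * backward Q G m f x
  | 0, _, _, _ => rfl
  | m + 1, _, hf, c => by
    simp only [backward]
    rw [backwardStep_const_mul (hG _) hf,
      backward_const_mul hG m (measurable_backwardStep (hG _) hf)]

end Backward

theorem withDensity_mono_measure {μ ν : Measure X} (h : μ ≤ ν) (f : X → ℝ≥0∞) :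
    μ.withDensity f ≤ ν.withDensity f :=
  Measure.le_iff.2 fun s hs => by
    rw [withDensity_apply _ hs, withDensity_apply _ hs]
    exact lintegral_mono' (Measure.restrict_mono subset_rfl h) le_rfl

def IsLDKernel (Q : Kernel X X) (lam : Measure X) (a b : ℝ≥0∞) : Prop :=
  ∀ x, a • lam ≤ Q x ∧ Q x ≤ b • lam

namespace IsLDKernel

variable {Q : Kernel X X} {lam : Measure X} {a b : ℝ≥0∞} {G : ℕ → X → ℝ≥0∞} {μ : Measure X}
  {w v : X → ℝ≥0∞}

theorem mul_lintegral_le_backwardStep (hQ : IsLDKernel Q lam a b) (x : X) :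
    a * ∫⁻ z, w z * v z ∂lam ≤ backwardStep Q w v x := by
  rw [← smul_eq_mul, ← lintegral_smul_measure]
  exact lintegral_mono' (hQ x).1 le_rfl

theorem backwardStep_le_mul_lintegral (hQ : IsLDKernel Q lam a b) (x : X) :
    backwardStep Q w v x ≤ b * ∫⁻ z, w z * v z ∂lam := by
  rw [← smul_eq_mul, ← lintegral_smul_measure]
  exact lintegral_mono' (hQ x).2 le_rfl

theorem backwardStep_ne_zero (hQ : IsLDKernel Q lam a b) (ha : a ≠ 0)
    (h0 : ∫⁻ z, w z * v z ∂lam ≠ 0) (x : X) : backwardStep Q w v x ≠ 0 :=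
  (lt_of_lt_of_le (ENNReal.mul_pos ha h0) (hQ.mul_lintegral_le_backwardStep x)).ne'

theorem backwardStep_ne_top (hQ : IsLDKernel Q lam a b) (hb : b ≠ ∞)
    (htop : ∫⁻ z, w z * v z ∂lam ≠ ∞) (x : X) : backwardStep Q w v x ≠ ∞ :=
  ne_top_of_le_ne_top (ENNReal.mul_ne_top hb htop) (hQ.backwardStep_le_mul_lintegral x)

theorem mul_backward_one_le_backward_succ (hQ : IsLDKernel Q lam a b)
    (hG : ∀ i, Measurable (G i)) (m : ℕ) (x : X) :
    a * (∫⁻ z, G (m + 1) z * v z ∂lam) * backward Q G m 1 x ≤ backward Q G (m + 1) v x := by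
  refine (congrFun (backward_const_mul hG m measurable_one _) x).symm.trans_le ?_
  exact backward_mono m (fun z => by simpa using hQ.mul_lintegral_le_backwardStep z) x

theorem backward_succ_le_mul_backward_one (hQ : IsLDKernel Q lam a b)
    (hG : ∀ i, Measurable (G i)) (m : ℕ) (x : X) :
    backward Q G (m + 1) v x ≤ b * (∫⁻ z, G (m + 1) z * v z ∂lam) * backward Q G m 1 x := by
  refine le_of_le_of_eq ?_ (congrFun (backward_const_mul hG m measurable_one _) x)
  exact backward_mono m (fun z => by simpa using hQ.backwardStep_le_mul_lintegral z) x

theorem lintegral_ne_zero_ne_top_of_backward_succ (hQ : IsLDKernel Q lam a b) (ha : a ≠ 0)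
    (hG : ∀ i, Measurable (G i)) {m : ℕ}
    (h0 : ∫⁻ x, backward Q G (m + 1) v x ∂μ ≠ 0)
    (htop : ∫⁻ x, backward Q G (m + 1) v x ∂μ ≠ ∞) :
    ∫⁻ z, G (m + 1) z * v z ∂lam ≠ 0 ∧ ∫⁻ z, G (m + 1) z * v z ∂lam ≠ ∞ := by
  set P := ∫⁻ z, G (m + 1) z * v z ∂lam
  set B := ∫⁻ x, backward Q G m 1 x ∂μ
  have hB : Measurable (backward Q G m 1) := measurable_backward hG m measurable_one
  have hlower : a * P * B ≤ ∫⁻ x, backward Q G (m + 1) v x ∂μ := by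
    rw [← lintegral_const_mul _ hB]
    exact lintegral_mono (hQ.mul_backward_one_le_backward_succ hG m)
  have hupper : ∫⁻ x, backward Q G (m + 1) v x ∂μ ≤ b * P * B := by
    rw [← lintegral_const_mul _ hB]
    exact lintegral_mono (hQ.backward_succ_le_mul_backward_one hG m)
  have hP0 : P ≠ 0 := fun hP => h0 (le_zero_iff.1 (by simpa [hP] using hupper))
  have hB0 : B ≠ 0 := fun hB => h0 (le_zero_iff.1 (by simpa [hB] using hupper))
  refine ⟨hP0, fun hP => htop (top_le_iff.1 ?_)⟩
  rwa [hP, ENNReal.mul_top ha, ENNReal.top_mul hB0] at hlower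

theorem backward_ne_zero_ne_top (hQ : IsLDKernel Q lam a b) (ha : a ≠ 0) (hb : b ≠ ∞)
    (hG : ∀ i, Measurable (G i)) :
    ∀ m {v : X → ℝ≥0∞}, (∀ z, v z ≠ 0 ∧ v z ≠ ∞) → ∫⁻ x, backward Q G m v x ∂μ ≠ 0 →
      ∫⁻ x, backward Q G m v x ∂μ ≠ ∞ → ∀ x, backward Q G m v x ≠ 0 ∧ backward Q G m v x ≠ ∞
  | 0, _, hv, _, _ => hv
  | m + 1, _, _, h0, htop => by
    obtain ⟨hP0, hPtop⟩ := hQ.lintegral_ne_zero_ne_top_of_backward_succ ha hG h0 htop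
    exact backward_ne_zero_ne_top hQ ha hb hG m
      (fun z => ⟨hQ.backwardStep_ne_zero ha hP0 z, hQ.backwardStep_ne_top hb hPtop z⟩) h0 htop

/-- One backward step contracts oscillations of ratios by `1 - a / b`: the ratio
`Q(w u) / Q(w v)` at `x` is the mean of `u / v` under `Q(x, dz) w(z) v(z)` normalised,
and all these probability measures dominate `a / b` times the normalisation of
`lam(dz) w(z) v(z)`. -/
theorem oscillationLE_backwardStep_div (hQ : IsLDKernel Q lam a b) (ha : a ≠ 0) (hb : b ≠ ∞)
    {u : X → ℝ≥0∞} (hw : Measurable w) (hu : Measurable u) (hv : Measurable v)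
    (hv0 : ∀ z, v z ≠ 0 ∧ v z ≠ ∞) (hP0 : ∫⁻ z, w z * v z ∂lam ≠ 0)
    (hPtop : ∫⁻ z, w z * v z ∂lam ≠ ∞) {r : ℝ≥0∞} (hosc : OscillationLE (fun z => u z / v z) r) :
    OscillationLE (fun x => backwardStep Q w u x / backwardStep Q w v x) ((1 - a / b) * r) := by
  set P := ∫⁻ z, w z * v z ∂lam
  have hwv : Measurable fun z => w z * v z := hw.mul hv
  set π := P⁻¹ • lam.withDensity fun z => w z * v z
  have : IsProbabilityMeasure π := isProbabilityMeasure_inv_smul_withDensity hP0 hPtop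
  have hQx : ∀ x, IsProbabilityMeasure
      ((∫⁻ z, w z * v z ∂Q x)⁻¹ • (Q x).withDensity fun z => w z * v z) := fun x =>
    isProbabilityMeasure_inv_smul_withDensity (hQ.backwardStep_ne_zero ha hP0 x)
      (hQ.backwardStep_ne_top hb hPtop x)
  have hratio : ∀ x, backwardStep Q w u x / backwardStep Q w v x
      = ∫⁻ z, u z / v z ∂((∫⁻ z, w z * v z ∂Q x)⁻¹ • (Q x).withDensity fun z => w z * v z) :=
    fun x => by
      rw [lintegral_inv_smul_withDensity (h := fun z => u z / v z) hwv (hu.div hv)]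
      congr 1
      refine lintegral_congr fun z => ?_
      rw [mul_assoc, ENNReal.mul_div_cancel (hv0 z).1 (hv0 z).2]
  have hκ : ∀ x, (a / b) • π
      ≤ (∫⁻ z, w z * v z ∂Q x)⁻¹ • (Q x).withDensity fun z => w z * v z := fun x =>
    calc (a / b) • π = (b * P)⁻¹ • (a • lam).withDensity fun z => w z * v z := by
          rw [withDensity_smul_measure, smul_smul, smul_smul,
            ENNReal.mul_inv (Or.inr hPtop) (Or.inr hP0), div_eq_mul_inv]
          ring_nf
      _ ≤ _ := by
          gcongr
          exacts [hQ.backwardStep_le_mul_lintegral x, withDensity_mono_measure (hQ x).1 _]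
  intro x x'
  dsimp only
  rw [hratio x, hratio x']
  simpa using lintegral_le_lintegral_add_of_le_of_le (hκ x) (hκ x') hosc

theorem oscillationLE_backward_div (hQ : IsLDKernel Q lam a b) (ha : a ≠ 0) (hb : b ≠ ∞)
    (hG : ∀ i, Measurable (G i)) :
    ∀ m {u v : X → ℝ≥0∞} {r : ℝ≥0∞}, Measurable u → Measurable v → (∀ z, v z ≠ 0 ∧ v z ≠ ∞) →
      ∫⁻ x, backward Q G m v x ∂μ ≠ 0 → ∫⁻ x, backward Q G m v x ∂μ ≠ ∞ →
      OscillationLE (fun z => u z / v z) r →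
      OscillationLE (fun x => backward Q G m u x / backward Q G m v x) ((1 - a / b) ^ m * r)
  | 0, _, _, _, _, _, _, _, _, hosc => by rw [pow_zero, one_mul]; exact hosc
  | m + 1, _, _, _, hu, hv, hv0, h0, htop, hosc => by
    obtain ⟨hP0, hPtop⟩ := hQ.lintegral_ne_zero_ne_top_of_backward_succ ha hG h0 htop
    rw [pow_succ, mul_assoc]
    exact oscillationLE_backward_div hQ ha hb hG m (measurable_backwardStep (hG _) hu)
      (measurable_backwardStep (hG _) hv)
      (fun z => ⟨hQ.backwardStep_ne_zero ha hP0 z, hQ.backwardStep_ne_top hb hPtop z⟩) h0 htop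
      (hQ.oscillationLE_backwardStep_div ha hb (hG _) hu hv hv0 hP0 hPtop hosc)

theorem lintegral_backward_div_le_add (hQ : IsLDKernel Q lam a b) (ha : a ≠ 0) (hb : b ≠ ∞)
    (hG : ∀ i, Measurable (G i)) {μ' : Measure X} (m : ℕ) {f : X → ℝ≥0∞} (hf : Measurable f)
    (hf1 : f ≤ 1) (h0 : ∫⁻ x, backward Q G m 1 x ∂μ ≠ 0)
    (htop : ∫⁻ x, backward Q G m 1 x ∂μ ≠ ∞) (h0' : ∫⁻ x, backward Q G m 1 x ∂μ' ≠ 0)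
    (htop' : ∫⁻ x, backward Q G m 1 x ∂μ' ≠ ∞) :
    (∫⁻ x, backward Q G m f x ∂μ) / ∫⁻ x, backward Q G m 1 x ∂μ
      ≤ (∫⁻ x, backward Q G m f x ∂μ') / ∫⁻ x, backward Q G m 1 x ∂μ' + (1 - a / b) ^ m := by
  set B := backward Q G m 1
  have hB : Measurable B := measurable_backward hG m measurable_one
  have hone : ∀ z, (1 : X → ℝ≥0∞) z ≠ 0 ∧ (1 : X → ℝ≥0∞) z ≠ ∞ :=
    fun _ => ⟨one_ne_zero, ENNReal.one_ne_top⟩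
  have hB0 := hQ.backward_ne_zero_ne_top ha hb hG m hone h0 htop
  set h := fun x => backward Q G m f x / B x
  have hh : Measurable h := (measurable_backward hG m hf).div hB
  have hosc : OscillationLE h ((1 - a / b) ^ m) := by
    have hf_osc : OscillationLE (fun z => f z / (1 : X → ℝ≥0∞) z) 1 :=
      fun z z' => by simpa using (hf1 z).trans le_add_self
    simpa using hQ.oscillationLE_backward_div ha hb hG m hf measurable_one hone h0 htop hf_osc
  have hnum : ∀ ν : Measure X, ∫⁻ x, backward Q G m f x ∂ν = ∫⁻ x, B x * h x ∂ν :=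
    fun ν => lintegral_congr fun x => (ENNReal.mul_div_cancel (hB0 x).1 (hB0 x).2).symm
  have := isProbabilityMeasure_inv_smul_withDensity h0 htop
  have := isProbabilityMeasure_inv_smul_withDensity h0' htop'
  rw [hnum, hnum, ← lintegral_inv_smul_withDensity hB hh, ← lintegral_inv_smul_withDensity hB hh]
  simpa using lintegral_le_lintegral_add_of_le_of_le (κ := 0)
    (μ := (∫⁻ x, B x ∂μ)⁻¹ • μ.withDensity B) (μ' := (∫⁻ x, B x ∂μ')⁻¹ • μ'.withDensity B)
    (Measure.zero_le _) (Measure.zero_le _) hosc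

end IsLDKernel

noncomputable def likelihood {Y : Type*} (g : X → Y → ℝ) (y : ℕ → Y) (k : ℕ) (x : X) : ℝ≥0∞ :=
  ENNReal.ofReal (g x (y k))

section Filtering

variable {Y : Type*} [MeasurableSpace Y] {Q : Kernel X X} {g : X → Y → ℝ} {y : ℕ → Y}
  {ν : Measure X}

theorem measurable_likelihood (hg : Measurable (Function.uncurry g)) (k : ℕ) :
    Measurable (likelihood g y k) :=
  (hg.comp measurable_prodMk_right).ennreal_ofReal

theorem lintegral_filtSeq_succ (hg : Measurable (Function.uncurry g)) (n : ℕ) {f : X → ℝ≥0∞}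
    (hf : Measurable f) :
    ∫⁻ x, f x ∂filtSeq Q g ν y (n + 1)
      = ∫⁻ x, backwardStep Q (likelihood g y (n + 1)) f x ∂filtSeq Q g ν y n := by
  change ∫⁻ x, f x ∂((filtSeq Q g ν y n).bind (fun x => Q x)).withDensity
    (likelihood g y (n + 1)) = _
  rw [lintegral_withDensity_eq_lintegral_mul _ (measurable_likelihood hg _) hf,
    Measure.lintegral_bind Q.measurable.aemeasurable
      ((measurable_likelihood hg _).mul hf).aemeasurable]
  rfl

theorem lintegral_filtSeq (hg : Measurable (Function.uncurry g)) :
    ∀ n {f : X → ℝ≥0∞}, Measurable f → ∫⁻ x, f x ∂filtSeq Q g ν y n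
      = ∫⁻ x, backward Q (likelihood g y) n f x ∂ν.withDensity (likelihood g y 0)
  | 0, _, _ => rfl
  | n + 1, _, hf => by
    rw [lintegral_filtSeq_succ hg n hf,
      lintegral_filtSeq hg n (measurable_backwardStep (measurable_likelihood hg _) hf)]
    rfl

theorem filt_apply_eq_div (hg : Measurable (Function.uncurry g)) (n : ℕ) {A : Set X}
    (hA : MeasurableSet A) :
    filt Q g ν y n A
      = (∫⁻ x, backward Q (likelihood g y) n (A.indicator 1) x ∂ν.withDensity (likelihood g y 0))
        / ∫⁻ x, backward Q (likelihood g y) n 1 x ∂ν.withDensity (likelihood g y 0) := by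
  rw [← lintegral_filtSeq hg n (measurable_one.indicator hA),
    ← lintegral_filtSeq hg n measurable_one, lintegral_indicator_one hA]
  simp only [Pi.one_apply, lintegral_one]
  rw [filt, Measure.smul_apply, smul_eq_mul, div_eq_mul_inv, mul_comm]

theorem IsLDKernel.filt_apply_le_add {lam : Measure X} {a b : ℝ≥0∞} (hQ : IsLDKernel Q lam a b)
    (ha : a ≠ 0) (hb : b ≠ ∞) (hg : Measurable (Function.uncurry g)) {ν' : Measure X} {n : ℕ}
    (h0 : filtSeq Q g ν y n Set.univ ≠ 0) (htop : filtSeq Q g ν y n Set.univ ≠ ∞)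
    (h0' : filtSeq Q g ν' y n Set.univ ≠ 0) (htop' : filtSeq Q g ν' y n Set.univ ≠ ∞)
    {A : Set X} (hA : MeasurableSet A) :
    filt Q g ν y n A ≤ filt Q g ν' y n A + (1 - a / b) ^ n := by
  have hmass : ∀ ξ : Measure X, filtSeq Q g ξ y n Set.univ
      = ∫⁻ x, backward Q (likelihood g y) n 1 x ∂ξ.withDensity (likelihood g y 0) := fun ξ => by
    rw [← lintegral_filtSeq hg n measurable_one]
    simp
  rw [hmass] at h0 htop h0' htop'
  rw [filt_apply_eq_div hg n hA, filt_apply_eq_div hg n hA]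
  exact hQ.lintegral_backward_div_le_add ha hb (measurable_likelihood hg) n
    (measurable_one.indicator hA) (Set.indicator_le_self _ _) h0 htop h0' htop'

end Filtering

theorem isProbabilityMeasure_filt {Y : Type*} {Q : Kernel X X} {g : X → Y → ℝ} {ν : Measure X}
    {y : ℕ → Y} {n : ℕ} (h0 : filtSeq Q g ν y n Set.univ ≠ 0)
    (htop : filtSeq Q g ν y n Set.univ ≠ ∞) : IsProbabilityMeasure (filt Q g ν y n) :=
  ⟨by rw [filt, Measure.smul_apply, smul_eq_mul, ENNReal.inv_mul_cancel h0 htop]⟩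

theorem tvDist_le_of_forall_le_add {μ μ' : Measure X} [IsFiniteMeasure μ] [IsFiniteMeasure μ']
    {r : ℝ≥0∞} (hr : r ≠ ∞) (h : ∀ A, MeasurableSet A → μ A ≤ μ' A + r ∧ μ' A ≤ μ A + r) :
    tvDist μ μ' ≤ r.toReal := by
  have : Nonempty {S : Set X // MeasurableSet S} := ⟨⟨∅, MeasurableSet.empty⟩⟩
  have hreal : ∀ {ξ ξ' : Measure X} [IsFiniteMeasure ξ'] {A : Set X}, ξ A ≤ ξ' A + r →
      (ξ A).toReal ≤ (ξ' A).toReal + r.toReal := fun hle => by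
    rw [← ENNReal.toReal_add (measure_ne_top _ _) hr]
    exact ENNReal.toReal_mono (ENNReal.add_ne_top.2 ⟨measure_ne_top _ _, hr⟩) hle
  refine ciSup_le fun A => abs_sub_le_iff.2 ⟨?_, ?_⟩
  · linarith [hreal (h A.1 A.2).1]
  · linarith [hreal (h A.1 A.2).2]

theorem IsLDSet.isLDKernel_univ {Q : Kernel X X} {lam : Measure X} {em ep : ℝ}
    (h : IsLDSet Q Set.univ lam em ep) :
    IsLDKernel Q lam (ENNReal.ofReal em) (ENNReal.ofReal ep) :=
  fun x => ⟨Measure.le_iff.2 fun A hA => by simpa using (h.2.2.2.2 x trivial A hA).1,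
    Measure.le_iff.2 fun A hA => by simpa using (h.2.2.2.2 x trivial A hA).2⟩

theorem IsLDSet.le_of_univ [Nonempty X] {Q : Kernel X X} [IsFiniteKernel Q] {lam : Measure X}
    {em ep : ℝ} (h : IsLDSet Q Set.univ lam em ep) : em ≤ ep := by
  obtain ⟨x⟩ := ‹Nonempty X›
  have hlow : ENNReal.ofReal em * lam Set.univ ≤ Q x Set.univ := by
    simpa using (h.isLDKernel_univ x).1 Set.univ
  have hup : Q x Set.univ ≤ ENNReal.ofReal ep * lam Set.univ := by
    simpa using (h.isLDKernel_univ x).2 Set.univ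
  have hlam : lam Set.univ ≠ ∞ := fun htop => by simp [htop, h.2.2.1] at hlow
  rw [← ENNReal.ofReal_le_ofReal_iff h.2.2.2.1.le, ← ENNReal.mul_le_mul_iff_left h.2.1.ne' hlam]
  exact hlow.trans hup

theorem toReal_one_sub_ofReal_div_pow_le {s t : ℝ} (hs : 0 ≤ s) (ht : 0 < t) (hst : s ≤ t)
    (n : ℕ) : ((1 - ENNReal.ofReal s / ENNReal.ofReal t) ^ n).toReal ≤ (1 - (s / t) ^ 2) ^ n := by
  have h1 : s / t ≤ 1 := (div_le_one ht).2 hst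
  have h0 : 0 ≤ s / t := div_nonneg hs ht.le
  rw [← ENNReal.ofReal_div_of_pos ht, ← ENNReal.ofReal_one, ← ENNReal.ofReal_sub _ h0,
    ← ENNReal.ofReal_pow (sub_nonneg.2 h1), ENNReal.toReal_ofReal (pow_nonneg (sub_nonneg.2 h1) _)]
  exact pow_le_pow_left₀ (sub_nonneg.2 h1) (by nlinarith) n

end

theorem forgetting_hmm_stmt6_general {X Y : Type*} [MeasurableSpace X] [MeasurableSpace Y]
    (Q : Kernel X X) [IsMarkovKernel Q]
    (g : X → Y → ℝ) (hgmeas : Measurable (Function.uncurry g))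
    (lamX : Measure X) (em ep : ℝ) (hX : IsLDSet Q Set.univ lamX em ep)
    (ν ν' : Measure X)
    (n : ℕ) (y : ℕ → Y)
    (hwdν : 0 < filtSeq Q g ν y n Set.univ ∧ filtSeq Q g ν y n Set.univ ≠ ⊤)
    (hwdν' : 0 < filtSeq Q g ν' y n Set.univ ∧ filtSeq Q g ν' y n Set.univ ≠ ⊤) :
    tvDist (filt Q g ν y n) (filt Q g ν' y n) ≤ (1 - (em / ep) ^ 2) ^ n := by
  have : Nonempty X := ⟨(nonempty_of_measure_ne_zero hwdν.1.ne').some⟩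
  have := isProbabilityMeasure_filt hwdν.1.ne' hwdν.2
  have := isProbabilityMeasure_filt hwdν'.1.ne' hwdν'.2
  have hQ := hX.isLDKernel_univ
  have ha : ENNReal.ofReal em ≠ 0 := (ENNReal.ofReal_pos.2 hX.2.2.1).ne'
  calc tvDist (filt Q g ν y n) (filt Q g ν' y n)
      ≤ ((1 - ENNReal.ofReal em / ENNReal.ofReal ep) ^ n).toReal :=
        tvDist_le_of_forall_le_add (by finiteness) fun A hA =>
          ⟨hQ.filt_apply_le_add ha ENNReal.ofReal_ne_top hgmeas hwdν.1.ne' hwdν.2 hwdν'.1.ne'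
            hwdν'.2 hA,
          hQ.filt_apply_le_add ha ENNReal.ofReal_ne_top hgmeas hwdν'.1.ne' hwdν'.2 hwdν.1.ne'
            hwdν.2 hA⟩
    _ ≤ (1 - (em / ep) ^ 2) ^ n :=
        toReal_one_sub_ofReal_div_pow_le hX.2.2.1.le hX.2.2.2.1 hX.le_of_univ n

/-- Remark after Proposition 5: if the whole state space `X` is an LD-set for
`Q` with constants `ε⁻_X, ε⁺_X`, then for any initial distributions `ν, ν'` and any
observations `y_{0:n}` for which both filtering distributions are well defined,
`‖φ_{ν,n}[y_{0:n}] − φ_{ν',n}[y_{0:n}]‖_TV ≤ ρ_X^n` with `ρ_X = 1 − (ε⁻_X/ε⁺_X)²`. -/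
theorem forgetting_hmm_stmt6 {X Y : Type*} [MeasurableSpace X] [MeasurableSpace Y]
    (Q : Kernel X X) [IsMarkovKernel Q]
    (g : X → Y → ℝ) (hgmeas : Measurable (Function.uncurry g)) (hgnn : ∀ x y, 0 ≤ g x y)
    (lamX : Measure X) (em ep : ℝ) (hX : IsLDSet Q Set.univ lamX em ep)
    (ν ν' : Measure X) [IsProbabilityMeasure ν] [IsProbabilityMeasure ν']
    (n : ℕ) (y : ℕ → Y)
    (hwdν : 0 < filtSeq Q g ν y n Set.univ ∧ filtSeq Q g ν y n Set.univ ≠ ⊤)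
    (hwdν' : 0 < filtSeq Q g ν' y n Set.univ ∧ filtSeq Q g ν' y n Set.univ ≠ ⊤) :
    tvDist (filt Q g ν y n) (filt Q g ν' y n) ≤ (1 - (em / ep) ^ 2) ^ n :=
  forgetting_hmm_stmt6_general Q g hgmeas lamX em ep hX ν ν' n y hwdν hwdν'
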